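/- T∅_L is model complete: if M and N are models of T∅_L and h : M → N is an L-embedding, then h is an elementary embedding. -/

import Mathlib

open FirstOrder FirstOrder.Language

universe u v w

/-- A flat formula in the variables `V`: either `R(z̄)` (`pos = true`), `¬ R(z̄)`
(`pos = false`), or `f(z̄) = z'`.  Constant symbols are `0`-ary function symbols. -/
inductive FlatFormula (L : FirstOrder.Language.{v, w}) (V : Type u) where
  | rel {n : ℕ} (R : L.Relations n) (z : Fin n → V) (pos : Bool) : FlatFormula L V
  | func {n : ℕ} (f : L.Functions n) (z : Fin n → V) (z' : V) : FlatFormula L V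

/-- Realization of a flat formula in an `L`-structure `M` under an assignment `v : V → M`. -/
def FlatFormula.Realize {L : FirstOrder.Language.{v, w}} {V : Type u} {M : Type*}
    [L.Structure M] (v : V → M) : FlatFormula L V → Prop
  | .rel R z pos => (Structure.RelMap R (fun i => v (z i)) ↔ pos = true)
  | .func f z z' => Structure.funMap f (fun i => v (z i)) = v z'

/-- A flat diagram (a set of flat formulas) is consistent if no relation instance occurs both
positively and negatively, and each function symbol is assigned at most one value on each
tuple of variables. -/
def FlatConsistent {L : FirstOrder.Language.{v, w}} {V : Type u}
    (Δ : Set (FlatFormula L V)) : Prop :=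
  (∀ {n : ℕ} (R : L.Relations n) (z : Fin n → V),
      ¬ (FlatFormula.rel R z true ∈ Δ ∧ FlatFormula.rel R z false ∈ Δ)) ∧
  (∀ {n : ℕ} (f : L.Functions n) (z : Fin n → V) (z₁ z₂ : V),
      FlatFormula.func f z z₁ ∈ Δ → FlatFormula.func f z z₂ ∈ Δ → z₁ = z₂)

/-- A flat formula mentions a variable on the right of `α ⊕ β` (i.e. among the `ȳ`)
in its argument tuple. -/
def FlatFormula.MentionsRight {L : FirstOrder.Language.{v, w}} {α β : Type u} :
    FlatFormula L (α ⊕ β) → Prop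
  | .rel _ z _ => ∃ i, (z i).isRight
  | .func _ z _ => ∃ i, (z i).isRight

/-- An extension diagram in `(x̄, ȳ)` (with `x̄` indexed by `Fin m` and `ȳ` by `Fin n`):
a finite consistent flat diagram each of whose formulas mentions a variable among the `ȳ`. -/
def IsExtensionDiagram {L : FirstOrder.Language.{v, w}} {m n : ℕ}
    (Δ : Set (FlatFormula L (Fin m ⊕ Fin n))) : Prop :=
  Δ.Finite ∧ FlatConsistent Δ ∧ ∀ φ ∈ Δ, φ.MentionsRight

/-- `M ⊨ φ_Δ(ā, b̄)`: all formulas of `Δ` hold under the assignment `Sum.elim a b`, and the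
combined tuple `ā b̄` is non-redundant (its entries are pairwise distinct). -/
def RealizesExtDiagram {L : FirstOrder.Language.{v, w}} {m n : ℕ} {M : Type*} [L.Structure M]
    (Δ : Set (FlatFormula L (Fin m ⊕ Fin n))) (a : Fin m → M) (b : Fin n → M) : Prop :=
  (∀ φ ∈ Δ, FlatFormula.Realize (Sum.elim a b) φ) ∧ Function.Injective (Sum.elim a b)

/-- `M` is a model of `T^∅_L`: `M` satisfies the sentence
`ψ_Δ = ∀ x̄ (δ(x̄) → ∃ ȳ φ_Δ(x̄, ȳ))` for every extension diagram `Δ`. -/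
def ModelsTEmpty (L : FirstOrder.Language.{v, w}) (M : Type*) [L.Structure M] : Prop :=
  ∀ (m n : ℕ) (Δ : Set (FlatFormula L (Fin m ⊕ Fin n))), IsExtensionDiagram Δ →
    ∀ a : Fin m → M, Function.Injective a → ∃ b : Fin n → M, RealizesExtDiagram Δ a b

/-- An `L`-structure `A` is existentially closed if every existential quantifier-free
statement with parameters in `A` which holds in some extension of `A` already holds in `A`. -/
def IsExistentiallyClosed (L : FirstOrder.Language.{v, w}) (A : Type u) [L.Structure A] :
    Prop :=
  ∀ (B : Type (max u v w)) [L.Structure B] (g : A ↪[L] B)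
    (m n : ℕ) (φ : L.Formula (Fin m ⊕ Fin n)), φ.IsQF →
      ∀ a : Fin m → A,
        (∃ b : Fin n → B, φ.Realize (Sum.elim (fun i => g (a i)) b)) →
        ∃ b : Fin n → A, φ.Realize (Sum.elim a b)

/-- A bundled `L`-structure (used to quantify existentially over `L`-structures). -/
structure BStructure (L : FirstOrder.Language.{v, w}) : Type (max (u + 1) v w) where
  carrier : Type u
  [struc : L.Structure carrier]

attribute [instance] BStructure.struc

instance {L : FirstOrder.Language.{v, w}} : CoeSort (BStructure.{u} L) (Type u) :=
  ⟨BStructure.carrier⟩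

/-- All variables occurring in a flat formula lie in the set `S`. -/
def FlatFormula.VarsIn {L : FirstOrder.Language.{v, w}} {V : Type u} (S : Set V) :
    FlatFormula L V → Prop
  | .rel _ z _ => ∀ i, z i ∈ S
  | .func _ z z' => (∀ i, z i ∈ S) ∧ z' ∈ S

/-- `Δ` is a complete consistent flat diagram in the variables `S`. -/
def FlatCompleteOn {L : FirstOrder.Language.{v, w}} {V : Type u} (S : Set V)
    (Δ : Set (FlatFormula L V)) : Prop :=
  FlatConsistent Δ ∧ (∀ φ ∈ Δ, FlatFormula.VarsIn S φ) ∧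
  (∀ {n : ℕ} (R : L.Relations n) (z : Fin n → V), (∀ i, z i ∈ S) →
      (FlatFormula.rel R z true ∈ Δ ∨ FlatFormula.rel R z false ∈ Δ)) ∧
  (∀ {n : ℕ} (f : L.Functions n) (z : Fin n → V), (∀ i, z i ∈ S) →
      ∃ z' ∈ S, FlatFormula.func f z z' ∈ Δ)

/-!
The truth of a formula in a model of `T^∅_L` only depends on a finite piece of the atomic type
of its parameters: the atomic formulas built from finitely many symbols and from terms of bounded
depth. The quantifier step is a back-and-forth argument. Suppose `c` in `M` and `d` in `N` have
the same atomic type up to a large enough depth, and let `e` be a new point of `N`. The terms of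
depth `ρ` over `d, e` have finitely many values `W`; by pigeonhole there is a level `τ` at which
the depth-`τ` hull of `d` inside `W` is closed under the relevant function symbols. The facts
about `W` that involve a point outside this hull then form an extension diagram over the hull,
which `M` realizes over the image of the hull. Finally an embedding preserves atomic types.
-/

open Set

variable {L : FirstOrder.Language.{v, w}}

theorem Monotone.exists_le_ncard_inter_succ_subset {α : Type*} {H : ℕ → Set α}
    (hH : Monotone H) {W : Set α} (hW : W.Finite) :
    ∃ τ ≤ W.ncard, W ∩ H (τ + 1) ⊆ H τ := by
  by_contra! hgrow
  have hcard : ∀ τ ≤ W.ncard + 1, τ ≤ (W ∩ H τ).ncard := by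
    intro τ hτ
    induction τ with
    | zero => exact Nat.zero_le _
    | succ τ ih =>
      obtain ⟨x, ⟨hxW, hxH⟩, hxτ⟩ := not_subset.1 (hgrow τ (by omega))
      have hlt : W ∩ H τ ⊂ W ∩ H (τ + 1) :=
        ssubset_iff_of_subset (inter_subset_inter_right W (hH τ.le_succ)) |>.2
          ⟨x, ⟨hxW, hxH⟩, fun hx => hxτ hx.2⟩
      have hlt_card := ncard_lt_ncard hlt (hW.subset inter_subset_left)
      have hτ_le := ih (by omega)
      omega
  have hle_card := ncard_le_ncard (inter_subset_left (t := H (W.ncard + 1))) hW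
  have hcard_top := hcard _ le_rfl
  omega

def FlatFormula.SymbolIn {V : Type*} (F : Set (Σ n, L.Functions n))
    (G : Set (Σ n, L.Relations n)) : FlatFormula L V → Prop
  | .rel R _ _ => ⟨_, R⟩ ∈ G
  | .func f _ _ => ⟨_, f⟩ ∈ F

theorem FlatFormula.finite_setOf_symbolIn {V : Type*} [Finite V]
    {F : Set (Σ n, L.Functions n)} {G : Set (Σ n, L.Relations n)}
    (hF : F.Finite) (hG : G.Finite) : {φ : FlatFormula L V | φ.SymbolIn F G}.Finite := by
  have hrel : (⋃ p ∈ G, range fun q : (Fin p.1 → V) × Bool =>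
      (FlatFormula.rel p.2 q.1 q.2 : FlatFormula L V)).Finite :=
    hG.biUnion fun _ _ => finite_range _
  have hfunc : (⋃ p ∈ F, range fun q : (Fin p.1 → V) × V =>
      (FlatFormula.func p.2 q.1 q.2 : FlatFormula L V)).Finite :=
    hF.biUnion fun _ _ => finite_range _
  refine (hrel.union hfunc).subset ?_
  rintro (⟨R, z, pos⟩ | ⟨f, z, z'⟩) hφ
  · exact Or.inl (mem_biUnion hφ ⟨(z, pos), rfl⟩)
  · exact Or.inr (mem_biUnion hφ ⟨(z, z'), rfl⟩)

def flatDiagram (F : Set (Σ n, L.Functions n)) (G : Set (Σ n, L.Relations n)) {m n : ℕ}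
    {N : Type*} [L.Structure N] (val : Fin m ⊕ Fin n → N) :
    Set (FlatFormula L (Fin m ⊕ Fin n)) :=
  {φ | φ.SymbolIn F G ∧ φ.MentionsRight ∧ φ.Realize val}

theorem isExtensionDiagram_flatDiagram {F : Set (Σ n, L.Functions n)}
    {G : Set (Σ n, L.Relations n)} (hF : F.Finite) (hG : G.Finite) {m n : ℕ} {N : Type*}
    [L.Structure N] {val : Fin m ⊕ Fin n → N} (hval : Function.Injective val) :
    IsExtensionDiagram (flatDiagram F G val) := by
  refine ⟨(FlatFormula.finite_setOf_symbolIn hF hG).subset fun _ hφ => hφ.1,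
    ⟨?_, ?_⟩, fun _ hφ => hφ.2.1⟩
  · rintro k R z ⟨⟨-, -, hpos⟩, ⟨-, -, hneg⟩⟩
    simp only [FlatFormula.Realize, iff_true, Bool.false_eq_true, iff_false] at hpos hneg
    exact hneg hpos
  · rintro k f z z₁ z₂ ⟨-, -, h₁⟩ ⟨-, -, h₂⟩
    exact hval (h₁.symm.trans h₂)

theorem ModelsTEmpty.nonempty {M : Type*} [L.Structure M]
    (hM : ModelsTEmpty L M) : Nonempty M := by
  have hempty : IsExtensionDiagram (∅ : Set (FlatFormula L (Fin 0 ⊕ Fin 1))) :=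
    ⟨finite_empty, ⟨fun _ _ h => h.1, fun _ _ _ _ h => h.elim⟩, fun _ h => h.elim⟩
  obtain ⟨b, -⟩ := hM 0 1 ∅ hempty Fin.elim0 fun x => x.elim0
  exact ⟨b 0⟩

theorem ModelsTEmpty.exists_extend_map {M N : Type*} [L.Structure M] [L.Structure N]
    (hM : ModelsTEmpty L M) {F : Set (Σ n, L.Functions n)}
    {G : Set (Σ n, L.Relations n)} (hF : F.Finite) (hG : G.Finite) {O W : Set N}
    (hW : W.Finite) (hOW : O ⊆ W) {θ : N → M} (hθ : InjOn θ O) :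
    ∃ θ' : N → M, EqOn θ' θ O ∧ InjOn θ' W ∧
      (∀ {n : ℕ} (f : L.Functions n), ⟨n, f⟩ ∈ F → ∀ w : Fin n → N, (∀ i, w i ∈ W) →
        Structure.funMap f w ∈ W → (∃ i, w i ∉ O) →
          θ' (Structure.funMap f w) = Structure.funMap f (θ' ∘ w)) ∧
      (∀ {n : ℕ} (R : L.Relations n), ⟨n, R⟩ ∈ G → ∀ w : Fin n → N, (∀ i, w i ∈ W) →
        (∃ i, w i ∉ O) → (Structure.RelMap R (θ' ∘ w) ↔ Structure.RelMap R w)) := by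
  classical
  obtain ⟨m, old, hold⟩ := (hW.subset hOW).fin_embedding
  obtain ⟨n, new, hnew⟩ := hW.sdiff (t := O) |>.fin_embedding
  set val : Fin m ⊕ Fin n → N := Sum.elim old new
  have hval_inj : Function.Injective val := old.injective.sumElim new.injective fun i j h =>
    (hnew.le ⟨j, rfl⟩).2 (h ▸ hold.le ⟨i, rfl⟩)
  have hval_range : range val = W := by
    rw [Set.Sum.elim_range, hold, hnew, union_sdiff_cancel hOW]
  have hval_isRight : ∀ p, val p ∉ O → p.isRight := by
    rintro (i | j) hp
    · exact absurd (hold.le ⟨i, rfl⟩) hp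
    · rfl
  obtain ⟨b, hb, hb_inj⟩ := hM m n (flatDiagram F G val)
    (isExtensionDiagram_flatDiagram hF hG hval_inj) (θ ∘ old)
    fun i j hij => old.injective (hθ (hold.le ⟨i, rfl⟩) (hold.le ⟨j, rfl⟩) hij)
  set θ' := Function.extend val (Sum.elim (θ ∘ old) b) θ
  have hθ'_val : θ' ∘ val = Sum.elim (θ ∘ old) b := funext (hval_inj.extend_apply _ _)
  have hθ'_val' (p) : θ' (val p) = Sum.elim (θ ∘ old) b p := congrFun hθ'_val p
  have hindex : ∀ {k} (w : Fin k → N), (∀ i, w i ∈ W) → ∃ z, w = val ∘ z := fun w hw => by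
    choose z hz using fun i => hval_range.ge (hw i)
    exact ⟨z, funext fun i => (hz i).symm⟩
  refine ⟨θ', ?_, ?_, ?_, ?_⟩
  · intro x hx
    obtain ⟨i, rfl⟩ := hold.ge hx
    exact hθ'_val' (Sum.inl i)
  · rw [← hval_range]
    rintro _ ⟨p, rfl⟩ _ ⟨q, rfl⟩ hpq
    simp only [hθ'_val'] at hpq
    rw [hb_inj hpq]
  · intro k f hf w hw hfw ⟨i, hi⟩
    obtain ⟨z, rfl⟩ := hindex w hw
    obtain ⟨z', hz'⟩ := hval_range.ge hfw
    have hreal := hb (.func f z z') ⟨hf, ⟨i, hval_isRight _ hi⟩, hz'.symm⟩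
    rw [← hz', hθ'_val', ← Function.comp_assoc, hθ'_val]
    exact hreal.symm
  · intro k R hR w hw ⟨i, hi⟩
    obtain ⟨z, rfl⟩ := hindex w hw
    have hreal := hb (.rel R z (decide (Structure.RelMap R (val ∘ z))))
      ⟨hR, ⟨i, hval_isRight _ hi⟩, by simp [FlatFormula.Realize, Function.comp_def]⟩
    rw [← Function.comp_assoc, hθ'_val]
    simpa [FlatFormula.Realize, Function.comp_def] using hreal

theorem Option.elim'_sumElim_comp_sumElim_snoc {α K : Type*} {l : ℕ} (x : α → K)
    (xs : Fin l → K) (a : K) :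
    Option.elim' a (Sum.elim x xs) ∘ Sum.elim (some ∘ Sum.inl) (Fin.snoc (some ∘ Sum.inr) none)
      = Sum.elim x (Fin.snoc xs a) := by
  rw [Sum.comp_elim, Fin.comp_snoc]
  rfl

namespace FirstOrder.Language

def boundedTerms (F : Set (Σ n, L.Functions n)) (ι : Type*) : ℕ → Set (L.Term ι)
  | 0 => range Term.var
  | s + 1 => boundedTerms F ι s ∪
      {t | ∃ (n : ℕ) (f : L.Functions n) (ts : Fin n → L.Term ι),
        ⟨n, f⟩ ∈ F ∧ (∀ i, ts i ∈ boundedTerms F ι s) ∧ t = Term.func f ts}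

section boundedTerms

variable {F F' : Set (Σ n, L.Functions n)} {ι : Type*}

theorem boundedTerms_mono {s s' : ℕ} (hF : F ⊆ F') (hs : s ≤ s') :
    boundedTerms F ι s ⊆ boundedTerms F' ι s' := by
  induction hs with
  | refl =>
    induction s with
    | zero => exact subset_rfl
    | succ s ih =>
      rintro t (ht | ⟨n, f, ts, hf, hts, rfl⟩)
      · exact Or.inl (ih ht)
      · exact Or.inr ⟨n, f, ts, hF hf, fun i => ih (hts i), rfl⟩
  | step _ ih => exact ih.trans subset_union_left

theorem var_mem_boundedTerms (s : ℕ) (i : ι) : Term.var i ∈ boundedTerms F ι s :=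
  boundedTerms_mono subset_rfl (Nat.zero_le s) ⟨i, rfl⟩

theorem func_mem_boundedTerms {s n : ℕ} {f : L.Functions n} (hf : ⟨n, f⟩ ∈ F)
    {ts : Fin n → L.Term ι} (hts : ∀ i, ts i ∈ boundedTerms F ι s) :
    Term.func f ts ∈ boundedTerms F ι (s + 1) :=
  Or.inr ⟨n, f, ts, hf, hts, rfl⟩

theorem relabel_mem_boundedTerms {κ : Type*} (j : κ → ι) {s : ℕ} {t : L.Term κ}
    (ht : t ∈ boundedTerms F κ s) : t.relabel j ∈ boundedTerms F ι s := by
  induction s generalizing t with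
  | zero => obtain ⟨i, rfl⟩ := ht; exact var_mem_boundedTerms 0 (j i)
  | succ s ih =>
    obtain ht | ⟨n, f, ts, hf, hts, rfl⟩ := ht
    · exact Or.inl (ih ht)
    · exact func_mem_boundedTerms hf fun i => ih (hts i)

theorem finite_boundedTerms (hF : F.Finite) [Finite ι] (s : ℕ) :
    (boundedTerms F ι s).Finite := by
  induction s with
  | zero => exact finite_range _
  | succ s ih =>
    have hfunc : (⋃ p ∈ F, (Term.func p.2 : (Fin p.1 → L.Term ι) → L.Term ι) ''
        univ.pi fun _ => boundedTerms F ι s).Finite :=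
      hF.biUnion fun p _ => (Finite.pi fun _ => ih).image _
    refine (ih.union hfunc).subset ?_
    rintro t (ht | ⟨n, f, ts, hf, hts, rfl⟩)
    · exact Or.inl ht
    · exact Or.inr (mem_biUnion hf ⟨ts, fun i _ => hts i, rfl⟩)

theorem Term.exists_mem_boundedTerms (t : L.Term ι) :
    ∃ F : Set (Σ n, L.Functions n), F.Finite ∧ ∃ s, t ∈ boundedTerms F ι s := by
  induction t with
  | var i => exact ⟨∅, finite_empty, 0, var_mem_boundedTerms 0 i⟩
  | @func n f ts ih =>
    choose F hF s hs using ih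
    refine ⟨insert ⟨n, f⟩ (⋃ i, F i), (finite_iUnion hF).insert _,
      Finset.univ.sup s + 1, func_mem_boundedTerms (mem_insert _ _) fun i => ?_⟩
    exact boundedTerms_mono ((subset_iUnion F i).trans (subset_insert _ _))
      (Finset.le_sup (Finset.mem_univ i)) (hs i)

end boundedTerms

def termHull (F : Set (Σ n, L.Functions n)) {ι M : Type*} [L.Structure M] (v : ι → M)
    (s : ℕ) : Set M :=
  (fun t : L.Term ι => t.realize v) '' boundedTerms F ι s

section hull

variable {F : Set (Σ n, L.Functions n)} {ι : Type*} {M : Type*} [L.Structure M]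

theorem termHull_mono {v : ι → M} : Monotone (termHull F v) :=
  fun _ _ hs => image_mono (boundedTerms_mono subset_rfl hs)

theorem apply_mem_termHull (v : ι → M) (s : ℕ) (i : ι) : v i ∈ termHull F v s :=
  ⟨Term.var i, var_mem_boundedTerms s i, rfl⟩

theorem funMap_mem_termHull {v : ι → M} {s n : ℕ} {f : L.Functions n} (hf : ⟨n, f⟩ ∈ F)
    {w : Fin n → M} (hw : ∀ i, w i ∈ termHull F v s) :
    Structure.funMap f w ∈ termHull F v (s + 1) := by
  choose ts hts hw using hw
  exact ⟨Term.func f ts, func_mem_boundedTerms hf hts, by simp [Term.realize, hw]⟩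

theorem finite_termHull (hF : F.Finite) [Finite ι] (v : ι → M) (s : ℕ) :
    (termHull F v s).Finite :=
  (finite_boundedTerms hF s).image _

end hull

def SameAtomicType (F : Set (Σ n, L.Functions n)) (G : Set (Σ n, L.Relations n)) (s : ℕ)
    {ι M N : Type*} [L.Structure M] [L.Structure N] (c : ι → M) (d : ι → N) : Prop :=
  (∀ t₁ ∈ boundedTerms F ι s, ∀ t₂ ∈ boundedTerms F ι s,
      (t₁.realize c = t₂.realize c ↔ t₁.realize d = t₂.realize d)) ∧
  ∀ {n : ℕ} (R : L.Relations n), ⟨n, R⟩ ∈ G → ∀ ts : Fin n → L.Term ι,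
      (∀ i, ts i ∈ boundedTerms F ι s) →
        (Structure.RelMap R (fun i => (ts i).realize c) ↔
          Structure.RelMap R (fun i => (ts i).realize d))

namespace SameAtomicType

variable {F F' : Set (Σ n, L.Functions n)} {G G' : Set (Σ n, L.Relations n)} {s s' : ℕ}
  {ι M N : Type*} [L.Structure M] [L.Structure N] {c : ι → M} {d : ι → N}

theorem symm (h : SameAtomicType F G s c d) : SameAtomicType F G s d c :=
  ⟨fun t₁ h₁ t₂ h₂ => (h.1 t₁ h₁ t₂ h₂).symm, fun R hR ts hts => (h.2 R hR ts hts).symm⟩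

theorem mono (h : SameAtomicType F' G' s' c d) (hF : F ⊆ F') (hG : G ⊆ G') (hs : s ≤ s') :
    SameAtomicType F G s c d :=
  ⟨fun t₁ h₁ t₂ h₂ => h.1 t₁ (boundedTerms_mono hF hs h₁) t₂ (boundedTerms_mono hF hs h₂),
    fun R hR ts hts => h.2 R (hG hR) ts fun i => boundedTerms_mono hF hs (hts i)⟩

theorem comp (h : SameAtomicType F G s c d) {κ : Type*} (j : κ → ι) :
    SameAtomicType F G s (c ∘ j) (d ∘ j) := by
  refine ⟨fun t₁ h₁ t₂ h₂ => ?_, fun R hR ts hts => ?_⟩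
  · simpa only [Term.realize_relabel] using
      h.1 _ (relabel_mem_boundedTerms j h₁) _ (relabel_mem_boundedTerms j h₂)
  · simpa only [Term.realize_relabel] using
      h.2 R hR (fun i => (ts i).relabel j) fun i => relabel_mem_boundedTerms j (hts i)

theorem of_embedding (e : M ↪[L] N) (c : ι → M) : SameAtomicType F G s (e ∘ c) c := by
  refine ⟨fun t₁ _ t₂ _ => ?_, fun R _ ts _ => ?_⟩
  · simp only [HomClass.realize_term, e.injective.eq_iff]
  · simp only [HomClass.realize_term]
    exact e.map_rel R _

end SameAtomicType

structure IsHullIso (F : Set (Σ n, L.Functions n)) (G : Set (Σ n, L.Relations n)) (s : ℕ)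
    {ι M N : Type*} [L.Structure M] [L.Structure N] (c : ι → M) (d : ι → N) (θ : N → M) :
    Prop where
  apply_eq : ∀ i, θ (d i) = c i
  injOn : InjOn θ (termHull F d s)
  map_fun : ∀ r < s, ∀ {n : ℕ} (f : L.Functions n), ⟨n, f⟩ ∈ F → ∀ w : Fin n → N,
    (∀ i, w i ∈ termHull F d r) → θ (Structure.funMap f w) = Structure.funMap f (θ ∘ w)
  map_rel : ∀ {n : ℕ} (R : L.Relations n), ⟨n, R⟩ ∈ G → ∀ w : Fin n → N,
    (∀ i, w i ∈ termHull F d s) → (Structure.RelMap R (θ ∘ w) ↔ Structure.RelMap R w)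

namespace IsHullIso

variable {F : Set (Σ n, L.Functions n)} {G : Set (Σ n, L.Relations n)} {s : ℕ}
  {ι M N : Type*} [L.Structure M] [L.Structure N] {c : ι → M} {d : ι → N} {θ : N → M}

theorem apply_realize (h : IsHullIso F G s c d θ) {t : L.Term ι}
    (ht : t ∈ boundedTerms F ι s) : θ (t.realize d) = t.realize c := by
  suffices ∀ r ≤ s, ∀ t ∈ boundedTerms F ι r, θ (t.realize d) = t.realize c from
    this s le_rfl t ht
  intro r hr
  induction r with
  | zero => rintro _ ⟨i, rfl⟩; exact h.apply_eq i
  | succ r ih =>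
    rintro t (ht | ⟨n, f, ts, hf, hts, rfl⟩)
    · exact ih (by omega) t ht
    · rw [Term.realize, h.map_fun r (by omega) f hf _ fun i => ⟨ts i, hts i, rfl⟩]
      exact congrArg _ (funext fun i => ih (by omega) (ts i) (hts i))

theorem sameAtomicType (h : IsHullIso F G s c d θ) : SameAtomicType F G s c d := by
  refine ⟨fun t₁ h₁ t₂ h₂ => ?_, fun R hR ts hts => ?_⟩
  · rw [← h.apply_realize h₁, ← h.apply_realize h₂]
    exact h.injOn.eq_iff ⟨t₁, h₁, rfl⟩ ⟨t₂, h₂, rfl⟩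
  · simp only [← h.apply_realize (hts _)]
    exact h.map_rel R hR _ fun i => ⟨ts i, hts i, rfl⟩

end IsHullIso

theorem SameAtomicType.exists_isHullIso {F : Set (Σ n, L.Functions n)}
    {G : Set (Σ n, L.Relations n)} {s : ℕ} {ι M N : Type*} [L.Structure M] [L.Structure N]
    [Nonempty M] {c : ι → M} {d : ι → N} (h : SameAtomicType F G s c d) :
    ∃ θ : N → M, IsHullIso F G s c d θ := by
  let realizeD : boundedTerms F ι s → N := fun t => t.1.realize d
  let realizeC : boundedTerms F ι s → M := fun t => t.1.realize c
  have hfactor : realizeC.FactorsThrough realizeD := fun t₁ t₂ heq =>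
    (h.1 t₁ t₁.2 t₂ t₂.2).2 heq
  let θ := Function.extend realizeD realizeC fun _ => Classical.arbitrary M
  have hθ {t : L.Term ι} (ht : t ∈ boundedTerms F ι s) : θ (t.realize d) = t.realize c :=
    hfactor.extend_apply _ ⟨t, ht⟩
  refine ⟨θ, fun i => hθ (var_mem_boundedTerms s i), ?_, ?_, ?_⟩
  · rintro _ ⟨t₁, h₁, rfl⟩ _ ⟨t₂, h₂, rfl⟩ heq
    rw [hθ h₁, hθ h₂] at heq
    exact (h.1 t₁ h₁ t₂ h₂).1 heq
  · intro r hr n f hf w hw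
    choose ts hts hw using hw
    obtain rfl : w = fun i => (ts i).realize d := funext fun i => (hw i).symm
    have hts' : ∀ i, ts i ∈ boundedTerms F ι s := fun i =>
      boundedTerms_mono subset_rfl hr.le (hts i)
    exact (hθ (boundedTerms_mono subset_rfl hr (func_mem_boundedTerms hf hts))).trans
      (congrArg _ (funext fun i => (hθ (hts' i)).symm))
  · intro n R hR w hw
    choose ts hts hw using hw
    obtain rfl : w = fun i => (ts i).realize d := funext fun i => (hw i).symm
    have hθts : θ ∘ (fun i => (ts i).realize d) = fun i => (ts i).realize c :=
      funext fun i => hθ (hts i)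
    rw [hθts]
    exact h.2 R hR ts hts

theorem SameAtomicType.exists_extend {F : Set (Σ n, L.Functions n)}
    {G : Set (Σ n, L.Relations n)} {ι M N : Type*} [Finite ι] [L.Structure M]
    [L.Structure N] (hM : ModelsTEmpty L M) (hF : F.Finite) (hG : G.Finite) {ρ : ℕ}
    {c : ι → M} {d : ι → N}
    (h : SameAtomicType F G ((boundedTerms F (Option ι) ρ).ncard + 1) c d) (e : N) :
    ∃ e' : M, SameAtomicType F G ρ (Option.elim' e' c) (Option.elim' e d) := by
  have := hM.nonempty
  obtain ⟨θ, hθ⟩ := h.exists_isHullIso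
  set W := termHull F (Option.elim' e d) ρ
  have hW : W.Finite := finite_termHull hF _ ρ
  -- Below a gap `τ` of the hull of `d` inside `W`, the old points are closed under `F`,
  -- so `θ` can be kept there and only the genuinely new points need to be realized.
  obtain ⟨τ, hτW, hgap⟩ :=
    (termHull_mono (F := F) (v := d)).exists_le_ncard_inter_succ_subset hW
  have hτ : τ < (boundedTerms F (Option ι) ρ).ncard + 1 :=
    Nat.lt_succ_of_le (hτW.trans (ncard_image_le (finite_boundedTerms hF ρ)))
  set O := W ∩ termHull F d τ
  have hOθ : O ⊆ termHull F d ((boundedTerms F (Option ι) ρ).ncard + 1) :=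
    inter_subset_right.trans (termHull_mono hτ.le)
  obtain ⟨θ', hθ'O, hθ'_inj, hθ'_fun, hθ'_rel⟩ :=
    hM.exists_extend_map hF hG hW inter_subset_left (hθ.injOn.mono hOθ)
  have hdO (i : ι) : d i ∈ O :=
    ⟨apply_mem_termHull (Option.elim' e d) ρ (some i), apply_mem_termHull d τ i⟩
  refine ⟨θ' e, IsHullIso.sameAtomicType (θ := θ') ⟨?_, hθ'_inj, ?_, ?_⟩⟩
  · rintro (_ | i)
    · rfl
    · exact (hθ'O (hdO i)).trans (hθ.apply_eq i)
  · intro r hr n f hf w hw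
    have hfw : Structure.funMap f w ∈ W := termHull_mono hr (funMap_mem_termHull hf hw)
    by_cases hnew : ∃ i, w i ∉ O
    · exact hθ'_fun f hf w (fun i => termHull_mono hr.le (hw i)) hfw hnew
    simp only [not_exists, not_not] at hnew
    have hfwO : Structure.funMap f w ∈ O :=
      ⟨hfw, hgap ⟨hfw, funMap_mem_termHull hf fun i => (hnew i).2⟩⟩
    rw [hθ'O hfwO, hθ.map_fun τ hτ f hf w fun i => (hnew i).2]
    exact congrArg _ (funext fun i => (hθ'O (hnew i)).symm)
  · intro n R hR w hw
    by_cases hnew : ∃ i, w i ∉ O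
    · exact hθ'_rel R hR w hw hnew
    simp only [not_exists, not_not] at hnew
    rw [show θ' ∘ w = θ ∘ w from funext fun i => hθ'O (hnew i)]
    exact hθ.map_rel R hR w fun i => hOθ (hnew i)

theorem BoundedFormula.exists_sameAtomicType_realize_iff {M N : Type*} [L.Structure M]
    [L.Structure N] (hM : ModelsTEmpty L M) (hN : ModelsTEmpty L N) {α : Type*} [Finite α]
    {l : ℕ} (φ : L.BoundedFormula α l) :
    ∃ (F : Set (Σ n, L.Functions n)) (G : Set (Σ n, L.Relations n)) (ρ : ℕ),
      F.Finite ∧ G.Finite ∧ ∀ (x : α → M) (xs : Fin l → M) (y : α → N) (ys : Fin l → N),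
        SameAtomicType F G ρ (Sum.elim x xs) (Sum.elim y ys) →
          (φ.Realize x xs ↔ φ.Realize y ys) := by
  induction φ with
  | falsum => exact ⟨∅, ∅, 0, finite_empty, finite_empty, fun _ _ _ _ _ => Iff.rfl⟩
  | equal t₁ t₂ =>
    obtain ⟨F₁, hF₁, s₁, h₁⟩ := t₁.exists_mem_boundedTerms
    obtain ⟨F₂, hF₂, s₂, h₂⟩ := t₂.exists_mem_boundedTerms
    exact ⟨F₁ ∪ F₂, ∅, max s₁ s₂, hF₁.union hF₂, finite_empty, fun _ _ _ _ h =>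
      h.1 t₁ (boundedTerms_mono subset_union_left (le_max_left _ _) h₁)
        t₂ (boundedTerms_mono subset_union_right (le_max_right _ _) h₂)⟩
  | rel R ts =>
    choose F hF s hs using fun i => (ts i).exists_mem_boundedTerms
    exact ⟨⋃ i, F i, {⟨_, R⟩}, Finset.univ.sup s, finite_iUnion hF, finite_singleton _,
      fun _ _ _ _ h => h.2 R rfl ts fun i =>
        boundedTerms_mono (subset_iUnion F i) (Finset.le_sup (Finset.mem_univ i)) (hs i)⟩
  | imp φ ψ ihφ ihψ =>
    obtain ⟨F₁, G₁, ρ₁, hF₁, hG₁, hφ⟩ := ihφ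
    obtain ⟨F₂, G₂, ρ₂, hF₂, hG₂, hψ⟩ := ihψ
    exact ⟨F₁ ∪ F₂, G₁ ∪ G₂, max ρ₁ ρ₂, hF₁.union hF₂, hG₁.union hG₂, fun x xs y ys h =>
      imp_congr
        (hφ x xs y ys (h.mono subset_union_left subset_union_left (le_max_left _ _)))
        (hψ x xs y ys (h.mono subset_union_right subset_union_right (le_max_right _ _)))⟩
  | @all l φ ih =>
    obtain ⟨F, G, ρ, hF, hG, hφ⟩ := ih
    refine ⟨F, G, (boundedTerms F (Option (α ⊕ Fin l)) ρ).ncard + 1, hF, hG,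
      fun x xs y ys h => ?_⟩
    have hsnoc {a : M} {b : N}
        (hab : SameAtomicType F G ρ (Option.elim' a (Sum.elim x xs))
          (Option.elim' b (Sum.elim y ys))) :
        φ.Realize x (Fin.snoc xs a) ↔ φ.Realize y (Fin.snoc ys b) := by
      refine hφ _ _ _ _ ?_
      simpa only [Option.elim'_sumElim_comp_sumElim_snoc] using
        hab.comp (Sum.elim (some ∘ Sum.inl) (Fin.snoc (some ∘ Sum.inr) none))
    simp only [BoundedFormula.realize_all]
    constructor
    · intro hx b
      obtain ⟨a, hab⟩ := h.exists_extend hM hF hG b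
      exact (hsnoc hab).1 (hx a)
    · intro hy a
      obtain ⟨b, hba⟩ := h.symm.exists_extend hN hF hG a
      exact (hsnoc hba.symm).2 (hy b)

end FirstOrder.Language

/-- `T^∅_L` is model complete: any `L`-embedding between models of
`T^∅_L` is elementary. -/
theorem tEmpty_model_complete (L : FirstOrder.Language.{v, w})
    (M : Type u) (N : Type u') [L.Structure M] [L.Structure N]
    (hM : ModelsTEmpty L M) (hN : ModelsTEmpty L N) (h : M ↪[L] N) :
    ∀ (k : ℕ) (φ : L.Formula (Fin k)) (v : Fin k → M),
      φ.Realize (fun i => h (v i)) ↔ φ.Realize v := by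
  intro k φ v
  obtain ⟨F, G, ρ, -, -, hφ⟩ := φ.exists_sameAtomicType_realize_iff hN hM
  refine hφ (h ∘ v) default v default ?_
  rw [← Subsingleton.elim (h ∘ (default : Fin 0 → M)) default, ← Sum.comp_elim]
  exact SameAtomicType.of_embedding h _
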